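/- Let λ > 0 and let m, n be integers with m, n > λ + 1. Let μ_m and μ_n be Borel probability measures supported on subsets of diameter at most 1 of the sphere of radius √2/2 centered at the origin in ℝ^m and ℝ^n respectively, with I_λ(μ_m), I_λ(μ_n) ∈ (1, ∞). For t ∈ (0,1), let μ := (1−t)(μ_m ⊗ δ_0) + t(δ_0 ⊗ μ_n) on ℝ^{m+n} = ℝ^m × ℝ^n, where δ_0 denotes the point mass at the origin of ℝ^n and ℝ^m respectively. Then the support of μ lies in the sphere of radius √2/2 in ℝ^{m+n} and has diameter at most 1, and I_λ(μ) − 1 = (1−t)^2 (I_λ(μ_m) − 1) + t^2 (I_λ(μ_n) − 1). Consequently, minimizing over t ∈ (0,1), inf_t (I_λ(μ) − 1) ≤ (I_λ(μ_m) − 1)(I_λ(μ_n) − 1) / (I_λ(μ_m) + I_λ(μ_n) − 2). -/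

import Mathlib

open MeasureTheory Filter ENNReal Metric Topology

noncomputable section

/-- `ℝ^n` with the Euclidean metric. -/
abbrev Euc (n : ℕ) := EuclideanSpace ℝ (Fin n)

/-- The support of a Borel measure: the smallest closed set of full measure,
described as the set of points all of whose neighborhoods have positive measure. -/
def msupport {n : ℕ} (μ : Measure (Euc n)) : Set (Euc n) :=
  {x | ∀ U : Set (Euc n), IsOpen U → x ∈ U → 0 < μ U}

/-- The repulsive (Riesz) energy `∬ |x-y|^(-λ) dμ dμ`, valued in `[0,∞]`. -/
def rieszEnergy (n : ℕ) (lam : ℝ) (μ : Measure (Euc n)) : ℝ≥0∞ :=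
  ∫⁻ x, ∫⁻ y, edist x y ^ (-lam) ∂μ ∂μ

/-- The attractive–repulsive energy `E_{α,λ}(μ) = ∬ (|x-y|^α + |x-y|^(-λ)) dμ dμ`. -/
def energy (n : ℕ) (a lam : ℝ) (μ : Measure (Euc n)) : ℝ≥0∞ :=
  ∫⁻ x, ∫⁻ y, (edist x y ^ a + edist x y ^ (-lam)) ∂μ ∂μ

/-- Embedding `ℝ^m → ℝ^{m+n}`, `a ↦ (a, 0)`. -/
def embL (m n : ℕ) (a : Euc m) : Euc (m + n) :=
  (EuclideanSpace.equiv (Fin (m + n)) ℝ).symm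
    (Fin.append (EuclideanSpace.equiv (Fin m) ℝ a) (0 : Fin n → ℝ))

/-- Embedding `ℝ^n → ℝ^{m+n}`, `b ↦ (0, b)`. -/
def embR (m n : ℕ) (b : Euc n) : Euc (m + n) :=
  (EuclideanSpace.equiv (Fin (m + n)) ℝ).symm
    (Fin.append (0 : Fin m → ℝ) (EuclideanSpace.equiv (Fin n) ℝ b))

/-- The convex combination `(1-t)(μ_m ⊗ δ_0) + t(δ_0 ⊗ μ_n)` on
`ℝ^{m+n} = ℝ^m × ℝ^n`. -/
def mix (m n : ℕ) (t : ℝ) (μm : Measure (Euc m)) (μn : Measure (Euc n)) :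
    Measure (Euc (m + n)) :=
  ENNReal.ofReal (1 - t) • Measure.map (embL m n) μm +
    ENNReal.ofReal t • Measure.map (embR m n) μn


/-! ### Auxiliary lemmas -/

lemma isometry_embL (m n : ℕ) : Isometry (embL m n) := by
  apply Isometry.of_dist_eq; intro a a'
  rw [EuclideanSpace.dist_eq, EuclideanSpace.dist_eq, Fin.sum_univ_add]
  simp [embL]

lemma isometry_embR (m n : ℕ) : Isometry (embR m n) := by
  apply Isometry.of_dist_eq; intro b b'
  rw [EuclideanSpace.dist_eq, EuclideanSpace.dist_eq, Fin.sum_univ_add]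
  simp [embR]

lemma norm_embL (m n : ℕ) (a : Euc m) : ‖embL m n a‖ = ‖a‖ := by
  rw [EuclideanSpace.norm_eq, EuclideanSpace.norm_eq, Fin.sum_univ_add]
  simp [embL]

lemma norm_embR (m n : ℕ) (b : Euc n) : ‖embR m n b‖ = ‖b‖ := by
  rw [EuclideanSpace.norm_eq, EuclideanSpace.norm_eq, Fin.sum_univ_add]
  simp [embR]

lemma dist_embLR (m n : ℕ) (a : Euc m) (b : Euc n) :
    dist (embL m n a) (embR m n b) = Real.sqrt (‖a‖^2 + ‖b‖^2) := by
  rw [EuclideanSpace.dist_eq, Fin.sum_univ_add]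
  congr 1
  rw [EuclideanSpace.norm_eq, EuclideanSpace.norm_eq,
    Real.sq_sqrt (Finset.sum_nonneg fun i _ => sq_nonneg _),
    Real.sq_sqrt (Finset.sum_nonneg fun i _ => sq_nonneg _)]
  simp [embL, embR, Real.dist_eq, sq_abs]

lemma edist_embLR (m n : ℕ) (a : Euc m) (b : Euc n)
    (ha : ‖a‖ = Real.sqrt 2 / 2) (hb : ‖b‖ = Real.sqrt 2 / 2) :
    edist (embL m n a) (embR m n b) = 1 := by
  have h2 : (Real.sqrt 2 / 2) ^ 2 = 1/2 := by
    rw [div_pow, Real.sq_sqrt (by norm_num : (0:ℝ) ≤ 2)]; norm_num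
  rw [edist_dist, dist_embLR, ha, hb, h2]
  norm_num

lemma msupport_compl_null {k : ℕ} (μ : Measure (Euc k)) : μ (msupport μ)ᶜ = 0 := by
  apply measure_null_of_locally_null
  intro x hx
  simp only [msupport, Set.mem_compl_iff, Set.mem_setOf_eq, not_forall] at hx
  obtain ⟨U, hU, hxU, hμU⟩ := hx
  exact ⟨U, mem_nhdsWithin_of_mem_nhds (hU.mem_nhds hxU),
    le_antisymm (le_of_not_gt hμU) (zero_le)⟩

lemma ae_mem_msupport {k : ℕ} (μ : Measure (Euc k)) : ∀ᵐ a ∂μ, a ∈ msupport μ := by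
  rw [ae_iff]; exact msupport_compl_null μ

lemma msupport_subset_closed {k : ℕ} (μ : Measure (Euc k)) {T : Set (Euc k)}
    (hT : IsClosed T) (h0 : μ Tᶜ = 0) : msupport μ ⊆ T := by
  intro x hx
  by_contra hxT
  exact absurd (hx Tᶜ hT.isOpen_compl hxT) (by simp [h0])

lemma isClosed_msupport {k : ℕ} (μ : Measure (Euc k)) : IsClosed (msupport μ) := by
  rw [← isOpen_compl_iff, isOpen_iff_forall_mem_open]
  intro x hx
  simp only [msupport, Set.mem_compl_iff, Set.mem_setOf_eq, not_forall] at hx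
  obtain ⟨U, hU, hxU, hμU⟩ := hx
  refine ⟨U, fun y hy => ?_, hU, hxU⟩
  simp only [msupport, Set.mem_compl_iff, Set.mem_setOf_eq, not_forall]
  exact ⟨U, hU, hy, hμU⟩

lemma expand_lintegral {α : Type*} [MeasurableSpace α] (μ1 μ2 : Measure α)
    [SFinite μ1] [SFinite μ2]
    (c d : ℝ≥0∞) (F : α → α → ℝ≥0∞) (hF : Measurable (Function.uncurry F)) :
    (∫⁻ x, ∫⁻ y, F x y ∂(c • μ1 + d • μ2) ∂(c • μ1 + d • μ2)) =
      c * (c * ∫⁻ x, ∫⁻ y, F x y ∂μ1 ∂μ1 + d * ∫⁻ x, ∫⁻ y, F x y ∂μ2 ∂μ1)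
      + d * (c * ∫⁻ x, ∫⁻ y, F x y ∂μ1 ∂μ2 + d * ∫⁻ x, ∫⁻ y, F x y ∂μ2 ∂μ2) := by
  have hG1 : Measurable fun x => ∫⁻ y, F x y ∂μ1 := hF.lintegral_prod_right'
  have hG2 : Measurable fun x => ∫⁻ y, F x y ∂μ2 := hF.lintegral_prod_right'
  have key : ∀ x, ∫⁻ y, F x y ∂(c • μ1 + d • μ2)
      = c * ∫⁻ y, F x y ∂μ1 + d * ∫⁻ y, F x y ∂μ2 := by
    intro x; rw [lintegral_add_measure, lintegral_smul_measure, lintegral_smul_measure, smul_eq_mul, smul_eq_mul]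
  simp_rw [key]
  rw [lintegral_add_measure, lintegral_smul_measure, lintegral_smul_measure,
    lintegral_add_left (hG1.const_mul c), lintegral_add_left (hG1.const_mul c),
    lintegral_const_mul c hG1, lintegral_const_mul d hG2,
    lintegral_const_mul c hG1, lintegral_const_mul d hG2, smul_eq_mul, smul_eq_mul]

/-- the gluing construction. Given probability measures `μ_m`,
`μ_n` supported in sets of diameter at most `1` of the spheres of radius `√2/2`
in `ℝ^m`, `ℝ^n`, with Riesz energies in `(1,∞)`, the measure
`μ = (1-t)(μ_m ⊗ δ_0) + t(δ_0 ⊗ μ_n)` is supported in the sphere of radius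
`√2/2` in `ℝ^{m+n}` within a set of diameter at most `1`, and
`I_λ(μ) - 1 = (1-t)² (I_λ(μ_m) - 1) + t² (I_λ(μ_n) - 1)`.  Minimizing over `t`,
`inf_t (I_λ(μ)-1) ≤ (I_λ(μ_m)-1)(I_λ(μ_n)-1)/(I_λ(μ_m)+I_λ(μ_n)-2)`. -/
theorem stmt17 (lam : ℝ) (hlam : 0 < lam) (m n : ℕ)
    (hm : lam + 1 < (m : ℝ)) (hn : lam + 1 < (n : ℝ))
    (μm : Measure (Euc m)) (hμm : IsProbabilityMeasure μm)
    (hsm : msupport μm ⊆ sphere (0 : Euc m) (Real.sqrt 2 / 2))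
    (hdm : EMetric.diam (msupport μm) ≤ 1)
    (hIm1 : 1 < rieszEnergy m lam μm) (hIm2 : rieszEnergy m lam μm < ⊤)
    (μn : Measure (Euc n)) (hμn : IsProbabilityMeasure μn)
    (hsn : msupport μn ⊆ sphere (0 : Euc n) (Real.sqrt 2 / 2))
    (hdn : EMetric.diam (msupport μn) ≤ 1)
    (hIn1 : 1 < rieszEnergy n lam μn) (hIn2 : rieszEnergy n lam μn < ⊤) :
    (∀ t ∈ Set.Ioo (0 : ℝ) 1,
      msupport (mix m n t μm μn) ⊆ sphere (0 : Euc (m + n)) (Real.sqrt 2 / 2) ∧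
      EMetric.diam (msupport (mix m n t μm μn)) ≤ 1 ∧
      rieszEnergy (m + n) lam (mix m n t μm μn) - 1
        = ENNReal.ofReal ((1 - t) ^ 2) * (rieszEnergy m lam μm - 1)
          + ENNReal.ofReal (t ^ 2) * (rieszEnergy n lam μn - 1)) ∧
    (⨅ t : Set.Ioo (0 : ℝ) 1, (rieszEnergy (m + n) lam (mix m n t.1 μm μn) - 1))
      ≤ (rieszEnergy m lam μm - 1) * (rieszEnergy n lam μn - 1)
          / (rieszEnergy m lam μm + rieszEnergy n lam μn - 2) := by
  classical
  have hmL : Measurable (embL m n) := (isometry_embL m n).continuous.measurable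
  have hmR : Measurable (embR m n) := (isometry_embR m n).continuous.measurable
  haveI hPL : IsProbabilityMeasure (Measure.map (embL m n) μm) :=
    Measure.isProbabilityMeasure_map hmL.aemeasurable
  haveI hPR : IsProbabilityMeasure (Measure.map (embR m n) μn) :=
    Measure.isProbabilityMeasure_map hmR.aemeasurable
  set Im := rieszEnergy m lam μm with hImdef
  set In := rieszEnergy n lam μn with hIndef
  set L := Measure.map (embL m n) μm with hLdef
  set R := Measure.map (embR m n) μn with hRdef
  have hF : Measurable (Function.uncurry fun (x y : Euc (m+n)) => edist x y ^ (-lam)) :=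
    Measurable.pow measurable_edist measurable_const
  have hg : ∀ x : Euc (m+n), Measurable fun y : Euc (m+n) => edist x y ^ (-lam) :=
    fun x => (measurable_const.edist measurable_id).pow measurable_const
  have hGL : Measurable fun x : Euc (m+n) => ∫⁻ y, edist x y ^ (-lam) ∂L :=
    hF.lintegral_prod_right'
  have hGR : Measurable fun x : Euc (m+n) => ∫⁻ y, edist x y ^ (-lam) ∂ R :=
    hF.lintegral_prod_right'
  -- norms on supports
  have hna : ∀ a ∈ msupport μm, ‖a‖ = Real.sqrt 2 / 2 :=
    fun a ha => mem_sphere_zero_iff_norm.mp (hsm ha)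
  have hnb : ∀ b ∈ msupport μn, ‖b‖ = Real.sqrt 2 / 2 :=
    fun b hb => mem_sphere_zero_iff_norm.mp (hsn hb)
  -- the four double integrals
  have hLL : (∫⁻ x, ∫⁻ y, edist x y ^ (-lam) ∂L ∂L) = Im := by
    conv_lhs => rw [hLdef, lintegral_map hGL hmL]
    have h1 : ∀ a : Euc m, (∫⁻ y, edist (embL m n a) y ^ (-lam) ∂L)
        = ∫⁻ a', edist a a' ^ (-lam) ∂μm := by
      intro a
      rw [hLdef, lintegral_map (hg _) hmL]
      simp_rw [(isometry_embL m n).edist_eq]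
    simp_rw [h1]
    rfl
  have hRR : (∫⁻ x, ∫⁻ y, edist x y ^ (-lam) ∂ R ∂ R) = In := by
    conv_lhs => rw [hRdef, lintegral_map hGR hmR]
    have h1 : ∀ b : Euc n, (∫⁻ y, edist (embR m n b) y ^ (-lam) ∂ R)
        = ∫⁻ b', edist b b' ^ (-lam) ∂μn := by
      intro b
      rw [hRdef, lintegral_map (hg _) hmR]
      simp_rw [(isometry_embR m n).edist_eq]
    simp_rw [h1]
    rfl
  have hLR : (∫⁻ x, ∫⁻ y, edist x y ^ (-lam) ∂ R ∂L) = 1 := by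
    conv_lhs => rw [hLdef, lintegral_map hGR hmL]
    have h1 : ∫⁻ a, (∫⁻ y, edist (embL m n a) y ^ (-lam) ∂ R) ∂μm = ∫⁻ _, 1 ∂μm := by
      apply lintegral_congr_ae
      filter_upwards [ae_mem_msupport μm] with a ha
      rw [hRdef, lintegral_map (hg _) hmR]
      have h2 : ∫⁻ b, edist (embL m n a) (embR m n b) ^ (-lam) ∂μn = ∫⁻ _, 1 ∂μn := by
        apply lintegral_congr_ae
        filter_upwards [ae_mem_msupport μn] with b hb
        rw [edist_embLR m n a b (hna a ha) (hnb b hb), ENNReal.one_rpow]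
      rw [h2, lintegral_one, measure_univ]
    rw [h1, lintegral_one, measure_univ]
  have hRL : (∫⁻ x, ∫⁻ y, edist x y ^ (-lam) ∂L ∂ R) = 1 := by
    conv_lhs => rw [hRdef, lintegral_map hGL hmR]
    have h1 : ∫⁻ b, (∫⁻ y, edist (embR m n b) y ^ (-lam) ∂L) ∂μn = ∫⁻ _, 1 ∂μn := by
      apply lintegral_congr_ae
      filter_upwards [ae_mem_msupport μn] with b hb
      rw [hLdef, lintegral_map (hg _) hmL]
      have h2 : ∫⁻ a, edist (embR m n b) (embL m n a) ^ (-lam) ∂μm = ∫⁻ _, 1 ∂μm := by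
        apply lintegral_congr_ae
        filter_upwards [ae_mem_msupport μm] with a ha
        rw [edist_comm, edist_embLR m n a b (hna a ha) (hnb b hb), ENNReal.one_rpow]
      rw [h2, lintegral_one, measure_univ]
    rw [h1, lintegral_one, measure_univ]
  -- A, B
  set A := Im - 1 with hAdef
  set B := In - 1 with hBdef
  have hImA : Im = A + 1 := (tsub_add_cancel_of_le hIm1.le).symm
  have hInB : In = B + 1 := (tsub_add_cancel_of_le hIn1.le).symm
  -- the energy value
  have hval : ∀ t : ℝ, t ∈ Set.Ioo (0:ℝ) 1 →
      rieszEnergy (m+n) lam (mix m n t μm μn)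
        = ENNReal.ofReal ((1-t)^2) * A + ENNReal.ofReal (t^2) * B + 1 := by
    intro t ht
    obtain ⟨ht0, ht1⟩ := ht
    have h1t : (0:ℝ) ≤ 1 - t := by linarith
    have hexp := expand_lintegral L R (ENNReal.ofReal (1-t)) (ENNReal.ofReal t)
      (fun x y => edist x y ^ (-lam)) hF
    have : rieszEnergy (m+n) lam (mix m n t μm μn)
        = (∫⁻ x, ∫⁻ y, edist x y ^ (-lam)
            ∂(ENNReal.ofReal (1-t) • L + ENNReal.ofReal t • R)
            ∂(ENNReal.ofReal (1-t) • L + ENNReal.ofReal t • R)) := rfl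
    rw [this, hexp, hLL, hRR, hLR, hRL, hImA, hInB]
    set c := ENNReal.ofReal (1-t) with hcdef
    set d := ENNReal.ofReal t with hddef
    have hcc : c * c = ENNReal.ofReal ((1-t)^2) := by
      rw [hcdef, ← ENNReal.ofReal_mul h1t, sq]
    have hdd : d * d = ENNReal.ofReal (t^2) := by
      rw [hddef, ← ENNReal.ofReal_mul ht0.le, sq]
    have hcd1 : c + d = 1 := by
      rw [hcdef, hddef, ← ENNReal.ofReal_add h1t ht0.le]
      norm_num
    calc c * (c * (A + 1) + d * 1) + d * (c * 1 + d * (B + 1))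
        = (c*c) * A + (d*d) * B + (c+d)*(c+d) := by ring
      _ = ENNReal.ofReal ((1-t)^2) * A + ENNReal.ofReal (t^2) * B + 1 := by
          rw [hcc, hdd, hcd1, one_mul]
  -- support containment set
  have hKm : IsCompact (msupport μm) :=
    Metric.isCompact_of_isClosed_isBounded (isClosed_msupport μm)
      (Metric.isBounded_sphere.subset hsm)
  have hKn : IsCompact (msupport μn) :=
    Metric.isCompact_of_isClosed_isBounded (isClosed_msupport μn)
      (Metric.isBounded_sphere.subset hsn)
  set T : Set (Euc (m+n)) := embL m n '' msupport μm ∪ embR m n '' msupport μn with hTdef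
  have hTclosed : IsClosed T :=
    ((hKm.image (isometry_embL m n).continuous).union
      (hKn.image (isometry_embR m n).continuous)).isClosed
  have hTsub : ∀ t : ℝ, t ∈ Set.Ioo (0:ℝ) 1 → msupport (mix m n t μm μn) ⊆ T := by
    intro t ht
    apply msupport_subset_closed _ hTclosed
    have hTm : MeasurableSet Tᶜ := hTclosed.measurableSet.compl
    have h1 : μm (embL m n ⁻¹' Tᶜ) = 0 := by
      apply measure_mono_null _ (msupport_compl_null μm)
      intro a ha
      intro hmem
      exact ha (Or.inl ⟨a, hmem, rfl⟩)
    have h2 : μn (embR m n ⁻¹' Tᶜ) = 0 := by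
      apply measure_mono_null _ (msupport_compl_null μn)
      intro b hb
      intro hmem
      exact hb (Or.inr ⟨b, hmem, rfl⟩)
    have : mix m n t μm μn Tᶜ
        = ENNReal.ofReal (1-t) * L Tᶜ + ENNReal.ofReal t * R Tᶜ := by
      simp [mix, hLdef, hRdef]
    rw [this, hLdef, hRdef, Measure.map_apply hmL hTm, Measure.map_apply hmR hTm, h1, h2]
    simp
  -- main three-part statement
  have main : ∀ t ∈ Set.Ioo (0 : ℝ) 1,
      msupport (mix m n t μm μn) ⊆ sphere (0 : Euc (m + n)) (Real.sqrt 2 / 2) ∧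
      EMetric.diam (msupport (mix m n t μm μn)) ≤ 1 ∧
      rieszEnergy (m + n) lam (mix m n t μm μn) - 1
        = ENNReal.ofReal ((1 - t) ^ 2) * (Im - 1) + ENNReal.ofReal (t ^ 2) * (In - 1) := by
    intro t ht
    refine ⟨?_, ?_, ?_⟩
    · refine (hTsub t ht).trans ?_
      rintro x (⟨a, ha, rfl⟩ | ⟨b, hb, rfl⟩)
      · rw [mem_sphere_zero_iff_norm, norm_embL]
        exact hna a ha
      · rw [mem_sphere_zero_iff_norm, norm_embR]
        exact hnb b hb
    · refine le_trans (EMetric.diam_mono (hTsub t ht)) ?_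
      apply EMetric.diam_le
      rintro x (⟨a, ha, rfl⟩ | ⟨b, hb, rfl⟩) y (⟨a', ha', rfl⟩ | ⟨b', hb', rfl⟩)
      · rw [(isometry_embL m n).edist_eq]
        exact le_trans (EMetric.edist_le_diam_of_mem ha ha') hdm
      · rw [edist_embLR m n a b' (hna a ha) (hnb b' hb')]
      · rw [edist_comm, edist_embLR m n a' b (hna a' ha') (hnb b hb)]
      · rw [(isometry_embR m n).edist_eq]
        exact le_trans (EMetric.edist_le_diam_of_mem hb hb') hdn
    · rw [hval t ht, ENNReal.add_sub_cancel_right ENNReal.one_ne_top]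
  refine ⟨main, ?_⟩
  -- infimum part
  have hAtop : A ≠ ⊤ := (tsub_le_self.trans_lt hIm2).ne
  have hBtop : B ≠ ⊤ := (tsub_le_self.trans_lt hIn2).ne
  have hApos : 0 < A := tsub_pos_of_lt hIm1
  have hBpos : 0 < B := tsub_pos_of_lt hIn1
  set a := A.toReal with hadef
  set b := B.toReal with hbdef
  have hapos : 0 < a := ENNReal.toReal_pos hApos.ne' hAtop
  have hbpos : 0 < b := ENNReal.toReal_pos hBpos.ne' hBtop
  have hAa : A = ENNReal.ofReal a := (ENNReal.ofReal_toReal hAtop).symm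
  have hBb : B = ENNReal.ofReal b := (ENNReal.ofReal_toReal hBtop).symm
  have habpos : 0 < a + b := by linarith
  set ts := a / (a + b) with htsdef
  have hts : ts ∈ Set.Ioo (0:ℝ) 1 :=
    ⟨div_pos hapos habpos, (div_lt_one habpos).mpr (by linarith)⟩
  have hdenom : Im + In - 2 = A + B := by
    rw [hImA, hInB, show (A+1)+(B+1) = (A+B)+2 by ring,
      ENNReal.add_sub_cancel_right ENNReal.ofNat_ne_top]
  refine le_trans (iInf_le _ (⟨ts, hts⟩ : Set.Ioo (0:ℝ) 1)) ?_
  rw [(main ts hts).2.2, hdenom, ← hAdef, ← hBdef, hAa, hBb,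
    ← ENNReal.ofReal_mul (sq_nonneg _), ← ENNReal.ofReal_mul (sq_nonneg _),
    ← ENNReal.ofReal_add (by positivity) (by positivity),
    ← ENNReal.ofReal_mul hapos.le,
    ← ENNReal.ofReal_add hapos.le hbpos.le,
    ← ENNReal.ofReal_div_of_pos habpos]
  apply ENNReal.ofReal_le_ofReal
  apply le_of_eq
  rw [htsdef]
  field_simp
  ring
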